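/- arXiv:2203.11307 — 3 statements merged into one kernel-verified Lean document; each statement's English description precedes it below -/
import Mathlib

section
/- Let Ω ⊆ ℝᵐ be nonempty, closed, and convex, let x ∈ Ω, g ∈ ℝᵐ, and γ > 0. Then ‖x − Π_Ω[x − g]‖ ≤ max{1, 1/γ} · ‖x − Π_Ω[x − γ g]‖. -/
/-!
Write `r(s) = x - P (x - s • g)`. Adding `t` times the variational inequality characterising
`P (x - s • g)` to `s` times the one characterising `P (x - t • g)` cancels `g` and leaves
`t ‖r(s)‖² + s ‖r(t)‖² ≤ (s + t) ⟪r(s), r(t)⟫`; with Cauchy–Schwarz this reads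
`(t ‖r(s)‖ - s ‖r(t)‖) (‖r(s)‖ - ‖r(t)‖) ≤ 0`. Hence for `0 < s ≤ t` both `‖r(s)‖ ≤ ‖r(t)‖`
and `‖r(t)‖ / t ≤ ‖r(s)‖ / s`; compare `r(1)` with `r(γ)` using whichever applies.
-/

open RealInnerProductSpace

section NearestPoint

variable {E : Type*} [NormedAddCommGroup E] [InnerProductSpace ℝ E] {K : Set E}

theorem real_inner_sub_le_zero_of_forall_norm_sub_le (hK : Convex ℝ K) {y p : E} (hp : p ∈ K)
    (hmin : ∀ z ∈ K, ‖y - p‖ ≤ ‖y - z‖) : ∀ z ∈ K, ⟪y - p, z - p⟫ ≤ 0 :=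
  (norm_eq_iInf_iff_real_inner_le_zero hK hp).1
    (IsMinOn.iInf_eq (f := fun z => ‖y - z‖) hp fun z hz => hmin z hz).symm

variable {P : E → E} (hK : Convex ℝ K)
  (hP : ∀ y, P y ∈ K ∧ ∀ z ∈ K, ‖y - P y‖ ≤ ‖y - z‖) (x g : E)
include hK hP

theorem mul_norm_sq_residual_add_le_inner {s t : ℝ} (hs : 0 ≤ s) (ht : 0 ≤ t) :
    t * ‖x - P (x - s • g)‖ ^ 2 + s * ‖x - P (x - t • g)‖ ^ 2 ≤
      (s + t) * ⟪x - P (x - s • g), x - P (x - t • g)⟫ := by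
  set a := x - P (x - s • g)
  set b := x - P (x - t • g)
  have hvs : ⟪a - s • g, a - b⟫ ≤ 0 := by
    have := real_inner_sub_le_zero_of_forall_norm_sub_le hK (hP (x - s • g)).1
      (hP _).2 _ (hP (x - t • g)).1
    convert this using 2 <;> simp only [a, b] <;> abel
  have hvt : ⟪b - t • g, b - a⟫ ≤ 0 := by
    have := real_inner_sub_le_zero_of_forall_norm_sub_le hK (hP (x - t • g)).1
      (hP _).2 _ (hP (x - s • g)).1
    convert this using 2 <;> simp only [a, b] <;> abel
  rw [← neg_sub a b, inner_neg_right, inner_sub_left, real_inner_smul_left] at hvt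
  rw [inner_sub_left, real_inner_smul_left] at hvs
  simp only [inner_sub_right, real_inner_self_eq_norm_sq, real_inner_comm a b] at hvs hvt
  linear_combination t * hvs + s * hvt

theorem mul_sub_mul_norm_residual_mul_sub_nonpos {s t : ℝ} (hs : 0 ≤ s) (ht : 0 ≤ t) :
    (t * ‖x - P (x - s • g)‖ - s * ‖x - P (x - t • g)‖) *
      (‖x - P (x - s • g)‖ - ‖x - P (x - t • g)‖) ≤ 0 := by
  have hquad := mul_norm_sq_residual_add_le_inner hK hP x g hs ht
  have hcs := real_inner_le_norm (x - P (x - s • g)) (x - P (x - t • g))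
  nlinarith [mul_le_mul_of_nonneg_left hcs (add_nonneg hs ht)]

theorem norm_residual_le_of_le {s t : ℝ} (hs : 0 < s) (hst : s ≤ t) :
    ‖x - P (x - s • g)‖ ≤ ‖x - P (x - t • g)‖ := by
  have h := mul_sub_mul_norm_residual_mul_sub_nonpos hK hP x g hs.le (hs.le.trans hst)
  set α := ‖x - P (x - s • g)‖
  set β := ‖x - P (x - t • g)‖
  by_contra! hlt
  have hpos : 0 < t * α - s * β := by
    nlinarith [norm_nonneg (x - P (x - t • g)), mul_lt_mul_of_pos_left hlt (hs.trans_le hst)]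
  nlinarith [mul_pos hpos (sub_pos.2 hlt)]

theorem mul_norm_residual_le_of_le {s t : ℝ} (hs : 0 < s) (hst : s ≤ t) :
    s * ‖x - P (x - t • g)‖ ≤ t * ‖x - P (x - s • g)‖ := by
  have h := mul_sub_mul_norm_residual_mul_sub_nonpos hK hP x g hs.le (hs.le.trans hst)
  set α := ‖x - P (x - s • g)‖
  set β := ‖x - P (x - t • g)‖
  by_contra! hlt
  nlinarith [mul_le_mul_of_nonneg_right hst (norm_nonneg (x - P (x - s • g)))]

end NearestPoint

theorem stmt2_general {m : ℕ} (Ω : Set (EuclideanSpace ℝ (Fin m)))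
    (hconv : Convex ℝ Ω)
    (P : EuclideanSpace ℝ (Fin m) → EuclideanSpace ℝ (Fin m))
    (hP : ∀ y, P y ∈ Ω ∧ ∀ z ∈ Ω, ‖y - P y‖ ≤ ‖y - z‖)
    (x g : EuclideanSpace ℝ (Fin m)) (γ : ℝ) (hγ : 0 < γ) :
    ‖x - P (x - g)‖ ≤ max 1 (1 / γ) * ‖x - P (x - γ • g)‖ := by
  have hg : x - P (x - g) = x - P (x - (1 : ℝ) • g) := by rw [one_smul]
  rcases le_total 1 γ with h | h
  · calc ‖x - P (x - g)‖ ≤ ‖x - P (x - γ • g)‖ :=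
          hg ▸ norm_residual_le_of_le hconv hP x g one_pos h
      _ ≤ max 1 (1 / γ) * ‖x - P (x - γ • g)‖ :=
        le_mul_of_one_le_left (norm_nonneg _) (le_max_left _ _)
  · have hmul := mul_norm_residual_le_of_le hconv hP x g hγ h
    rw [one_mul, ← hg] at hmul
    calc ‖x - P (x - g)‖ ≤ 1 / γ * ‖x - P (x - γ • g)‖ := by
          rw [one_div, ← div_eq_inv_mul, le_div_iff₀ hγ, mul_comm]; exact hmul
      _ ≤ max 1 (1 / γ) * ‖x - P (x - γ • g)‖ :=
        mul_le_mul_of_nonneg_right (le_max_right _ _) (norm_nonneg _)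

/-- Lemma 2 of the paper (from Tseng, Lemma 3.1): the unit-stepsize projected
gradient residual is bounded by `max{1, 1/γ}` times the stepsize-`γ` residual. -/
theorem stmt2 {m : ℕ} (Ω : Set (EuclideanSpace ℝ (Fin m)))
    (hne : Ω.Nonempty) (hcl : IsClosed Ω) (hconv : Convex ℝ Ω)
    (P : EuclideanSpace ℝ (Fin m) → EuclideanSpace ℝ (Fin m))
    (hP : ∀ y, P y ∈ Ω ∧ ∀ z ∈ Ω, ‖y - P y‖ ≤ ‖y - z‖)
    (x g : EuclideanSpace ℝ (Fin m)) (hx : x ∈ Ω) (γ : ℝ) (hγ : 0 < γ) :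
    ‖x - P (x - g)‖ ≤ max 1 (1 / γ) * ‖x - P (x - γ • g)‖ :=
  stmt2_general Ω hconv P hP x g γ hγ
end

section
/- Let Ω ⊆ ℝᵐ be nonempty, closed, and convex, and let γ > 0. The map φ(γ) = ‖x − Π_Ω[x − γ g]‖ is nondecreasing in γ for fixed x ∈ Ω and g ∈ ℝᵐ. -/
open RealInnerProductSpace



private lemma stmt3_aux (γ₁ γ₂ a b t G : ℝ) (hγ₁ : 0 < γ₁) (hle : γ₁ ≤ γ₂)
    (ha : 0 ≤ a) (hb : 0 ≤ b)
    (hA : a ^ 2 - t - γ₁ * G ≤ 0) (hB : b ^ 2 - t + γ₂ * G ≤ 0)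
    (hcs : t ≤ a * b) : a ≤ b := by
  have hγ₂ : 0 < γ₂ := lt_of_lt_of_le hγ₁ hle
  have key : γ₂ * a ^ 2 + γ₁ * b ^ 2 ≤ (γ₁ + γ₂) * t := by
    nlinarith [mul_le_mul_of_nonneg_left hA hγ₂.le, mul_le_mul_of_nonneg_left hB hγ₁.le]
  have habs : (a - b) * (γ₂ * a - γ₁ * b) ≤ 0 := by
    nlinarith [mul_nonneg (by linarith : (0:ℝ) ≤ γ₁ + γ₂) (sub_nonneg.2 hcs)]
  by_contra h
  push_neg at h
  have hpos : 0 < γ₂ * a - γ₁ * b := by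
    nlinarith [mul_le_mul_of_nonneg_right hle hb, mul_lt_mul_of_pos_left h hγ₂]
  nlinarith [mul_pos (sub_pos.2 h) hpos]

/-- Monotonicity of the projected-gradient residual `γ ↦ ‖x - Π_Ω[x - γ g]‖`
in the stepsize `γ > 0`. -/
theorem stmt3 {m : ℕ} (Ω : Set (EuclideanSpace ℝ (Fin m)))
    (hne : Ω.Nonempty) (hcl : IsClosed Ω) (hconv : Convex ℝ Ω)
    (P : EuclideanSpace ℝ (Fin m) → EuclideanSpace ℝ (Fin m))
    (hP : ∀ y, P y ∈ Ω ∧ ∀ z ∈ Ω, ‖y - P y‖ ≤ ‖y - z‖)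
    (x g : EuclideanSpace ℝ (Fin m)) (hx : x ∈ Ω) :
    ∀ γ₁ γ₂ : ℝ, 0 < γ₁ → γ₁ ≤ γ₂ →
      ‖x - P (x - γ₁ • g)‖ ≤ ‖x - P (x - γ₂ • g)‖ := by
  -- Variational inequality for the projection
  have hVI : ∀ y, ∀ z ∈ Ω, ⟪y - P y, z - P y⟫ ≤ 0 := by
    intro y
    have hmem := (hP y).1
    have heq : ‖y - P y‖ = ⨅ w : Ω, ‖y - w‖ := by
      have : Nonempty ↑Ω := hne.to_subtype
      apply le_antisymm
      · exact le_ciInf fun w => (hP y).2 w w.2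
      · exact ciInf_le ⟨0, fun r hr => by
          obtain ⟨w, rfl⟩ := hr; positivity⟩ (⟨P y, hmem⟩ : Ω)
    exact (norm_eq_iInf_iff_real_inner_le_zero hconv hmem).1 heq
  intro γ₁ γ₂ hγ₁ hle
  set p₁ := P (x - γ₁ • g) with hp₁
  set p₂ := P (x - γ₂ • g) with hp₂
  set d₁ := x - p₁ with hd₁
  set d₂ := x - p₂ with hd₂
  have hA := hVI (x - γ₁ • g) p₂ (hP (x - γ₂ • g)).1
  have hB := hVI (x - γ₂ • g) p₁ (hP (x - γ₁ • g)).1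
  have e1 : (x - γ₁ • g) - p₁ = d₁ - γ₁ • g := by rw [hd₁]; abel
  have e2 : (x - γ₂ • g) - p₂ = d₂ - γ₂ • g := by rw [hd₂]; abel
  have e3 : p₂ - p₁ = d₁ - d₂ := by rw [hd₁, hd₂]; abel
  have e4 : p₁ - p₂ = d₂ - d₁ := by rw [hd₁, hd₂]; abel
  rw [e1, e3] at hA
  rw [e2, e4] at hB
  rw [inner_sub_left, real_inner_smul_left] at hA hB
  have hg : ⟪g, d₂ - d₁⟫ = -⟪g, d₁ - d₂⟫ := by
    rw [← neg_sub d₁ d₂, inner_neg_right]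
  rw [hg] at hB
  have hA' : ⟪d₁, d₁ - d₂⟫ = ‖d₁‖^2 - ⟪d₁, d₂⟫ := by
    rw [inner_sub_right, real_inner_self_eq_norm_sq]
  have hB' : ⟪d₂, d₂ - d₁⟫ = ‖d₂‖^2 - ⟪d₁, d₂⟫ := by
    rw [inner_sub_right, real_inner_self_eq_norm_sq, real_inner_comm]
  rw [hA'] at hA
  rw [hB'] at hB
  exact stmt3_aux γ₁ γ₂ ‖d₁‖ ‖d₂‖ ⟪d₁, d₂⟫ ⟪g, d₁ - d₂⟫ hγ₁ hle
    (norm_nonneg _) (norm_nonneg _) (by linarith) (by linarith)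
    (real_inner_le_norm d₁ d₂)
end

section
/- Let f : ℝⁿ → ℝ be continuously differentiable with blockwise Lipschitz constants Lᵢⱼ (i.e., for x, y differing only in block j, ‖∇⁽ⁱ⁾f(x) − ∇⁽ⁱ⁾f(y)‖ ≤ Lᵢⱼ‖x⁽ʲ⁾ − y⁽ʲ⁾‖ and Lᵢⱼ = Lⱼᵢ). Let x, s ∈ ℝⁿ and let x̃ᵢ ∈ ℝⁿ agree with x in block i (x̃ᵢ⁽ⁱ⁾ = x⁽ⁱ⁾). Then Hᵢ := ∫₀¹ ⟨s⁽ⁱ⁾, ∇⁽ⁱ⁾f(x + τ s) − ∇⁽ⁱ⁾f(x̃ᵢ)⟩ dτ satisfies Hᵢ ≤ ‖s⁽ⁱ⁾‖ · Σ_{j=1}^N Lᵢⱼ ( (1/2)‖s⁽ʲ⁾‖ + ‖x⁽ʲ⁾ − x̃ᵢ⁽ʲ⁾‖ ). -/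
/-!
By Cauchy–Schwarz the integrand is at most `‖s⁽ⁱ⁾‖` times the change of the `i`-th gradient block
between `x + τ s` and `x̃ᵢ`. Passing from one point to the other one block at a time, the blockwise
Lipschitz bounds telescope to `∑ⱼ Lᵢⱼ ‖(x + τ s)⁽ʲ⁾ - x̃ᵢ⁽ʲ⁾‖ ≤ ∑ⱼ Lᵢⱼ (τ ‖s⁽ʲ⁾‖ + ‖x⁽ʲ⁾ - x̃ᵢ⁽ʲ⁾‖)`,
and `∫₀¹ τ dτ = 1/2`. The same telescoped bound makes the gradient block Lipschitz, so the
integrand is continuous, hence interval integrable.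
-/

open scoped RealInnerProductSpace
open Finset

section BlockwiseLipschitz

variable {ι : Type*} [Fintype ι] {p : ENNReal} {β : ι → Type*}
  [∀ k, SeminormedAddCommGroup (β k)] {F : Type*} [SeminormedAddCommGroup F]

theorem norm_sub_le_sum_of_blockwise_lipschitz {g : PiLp p β → F} {K : ι → ℝ}
    (hg : ∀ j, ∀ x y : PiLp p β, (∀ k, k ≠ j → x k = y k) → ‖g x - g y‖ ≤ K j * ‖x j - y j‖)
    (a b : PiLp p β) :
    ‖g a - g b‖ ≤ ∑ j, K j * ‖a j - b j‖ := by
  classical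
  let mix : Finset ι → PiLp p β := fun t => WithLp.toLp p fun k => if k ∈ t then a k else b k
  suffices h : ∀ t, ‖g (mix t) - g b‖ ≤ ∑ j ∈ t, K j * ‖a j - b j‖ by simpa [mix] using h univ
  intro t
  induction t using Finset.induction_on with
  | empty => simp [mix]
  | insert j t hj ih =>
    have hstep : ‖g (mix (insert j t)) - g (mix t)‖ ≤ K j * ‖a j - b j‖ := by
      have := hg j (mix (insert j t)) (mix t) fun k hk => by simp [mix, hk]
      simpa [mix, hj] using this
    calc ‖g (mix (insert j t)) - g b‖
        ≤ ‖g (mix (insert j t)) - g (mix t)‖ + ‖g (mix t) - g b‖ :=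
          norm_sub_le_norm_sub_add_norm_sub _ _ _
      _ ≤ K j * ‖a j - b j‖ + ∑ k ∈ t, K k * ‖a k - b k‖ := add_le_add hstep ih
      _ = ∑ k ∈ insert j t, K k * ‖a k - b k‖ := by rw [sum_insert hj]

theorem lipschitzWith_of_norm_sub_le_sum [Fact (1 ≤ p)] {g : PiLp p β → F} {K : ι → ℝ}
    (hg : ∀ a b : PiLp p β, ‖g a - g b‖ ≤ ∑ j, K j * ‖a j - b j‖) (hK : ∀ j, 0 ≤ K j) :
    LipschitzWith (∑ j, K j).toNNReal g := by
  refine LipschitzWith.of_dist_le' fun a b => ?_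
  rw [dist_eq_norm, dist_eq_norm, sum_mul]
  exact (hg a b).trans <| sum_le_sum fun j _ =>
    mul_le_mul_of_nonneg_left (PiLp.norm_apply_le (a - b) j) (hK j)

end BlockwiseLipschitz

theorem integral_mul_sum_affine {ι : Type*} (t : Finset ι) (c : ℝ) (L u v : ι → ℝ) :
    ∫ τ in (0:ℝ)..1, c * ∑ j ∈ t, L j * (τ * u j + v j) =
      c * ∑ j ∈ t, L j * ((1 / 2) * u j + v j) := by
  have hcont : ∀ j, Continuous fun τ : ℝ => L j * (τ * u j + v j) := by fun_prop
  rw [intervalIntegral.integral_const_mul,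
    intervalIntegral.integral_finsetSum fun j _ => (hcont j).intervalIntegrable 0 1]
  congr 1
  refine sum_congr rfl fun j _ => ?_
  rw [intervalIntegral.integral_const_mul, intervalIntegral.integral_add
    ((continuous_mul_const (u j)).intervalIntegrable 0 1) intervalIntegrable_const,
    intervalIntegral.integral_mul_const, integral_id]
  norm_num

theorem stmt11_general {N : ℕ} {n : Fin N → ℕ}
    (f : PiLp 2 (fun i : Fin N => EuclideanSpace ℝ (Fin (n i))) → ℝ)
    (L : Fin N → Fin N → ℝ) (hL0 : ∀ i j, 0 ≤ L i j)
    (hLip : ∀ i j, ∀ x y : PiLp 2 (fun i : Fin N => EuclideanSpace ℝ (Fin (n i))),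
      (∀ k, k ≠ j → x k = y k) →
      ‖gradient f x i - gradient f y i‖ ≤ L i j * ‖x j - y j‖)
    (x s xt : PiLp 2 (fun i : Fin N => EuclideanSpace ℝ (Fin (n i))))
    (i : Fin N) :
    (∫ τ in (0:ℝ)..1, ⟪s i, gradient f (x + τ • s) i - gradient f xt i⟫) ≤
      ‖s i‖ * ∑ j, L i j * ((1 / 2) * ‖s j‖ + ‖x j - xt j‖) := by
  have hgrad := norm_sub_le_sum_of_blockwise_lipschitz (g := fun v => gradient f v i) (hLip i)
  have hcont : Continuous fun τ : ℝ => ⟪s i, gradient f (x + τ • s) i - gradient f xt i⟫ :=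
    continuous_const.inner <| ((lipschitzWith_of_norm_sub_le_sum hgrad (hL0 i)).continuous.comp
      (continuous_const.add (continuous_id.smul continuous_const))).sub continuous_const
  have hpoint : ∀ τ ∈ Set.Icc (0:ℝ) 1, ⟪s i, gradient f (x + τ • s) i - gradient f xt i⟫ ≤
      ‖s i‖ * ∑ j, L i j * (τ * ‖s j‖ + ‖x j - xt j‖) := fun τ hτ => by
    refine (real_inner_le_norm _ _).trans <| mul_le_mul_of_nonneg_left
      ((hgrad _ _).trans <| sum_le_sum fun j _ => mul_le_mul_of_nonneg_left ?_ (hL0 i j))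
      (norm_nonneg _)
    calc ‖(x + τ • s) j - xt j‖ = ‖τ • s j + (x j - xt j)‖ := by
          rw [PiLp.add_apply, PiLp.smul_apply]; abel_nf
      _ ≤ τ * ‖s j‖ + ‖x j - xt j‖ := by
          simpa [norm_smul, abs_of_nonneg hτ.1] using norm_add_le (τ • s j) (x j - xt j)
  calc _ ≤ ∫ τ in (0:ℝ)..1, ‖s i‖ * ∑ j, L i j * (τ * ‖s j‖ + ‖x j - xt j‖) :=
        intervalIntegral.integral_mono_on zero_le_one (hcont.intervalIntegrable 0 1)
          ((by fun_prop : Continuous _).intervalIntegrable 0 1) hpoint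
    _ = _ := integral_mul_sum_affine _ _ _ _ _

/-- Bound on the asynchrony error term `Hᵢ` in the descent analysis
(inequality (13) of the paper). -/
theorem stmt11 {N : ℕ} {n : Fin N → ℕ}
    (f : PiLp 2 (fun i : Fin N => EuclideanSpace ℝ (Fin (n i))) → ℝ)
    (hf : ContDiff ℝ 1 f)
    (L : Fin N → Fin N → ℝ) (hL0 : ∀ i j, 0 ≤ L i j)
    (hLsymm : ∀ i j, L i j = L j i)
    (hLip : ∀ i j, ∀ x y : PiLp 2 (fun i : Fin N => EuclideanSpace ℝ (Fin (n i))),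
      (∀ k, k ≠ j → x k = y k) →
      ‖gradient f x i - gradient f y i‖ ≤ L i j * ‖x j - y j‖)
    (x s xt : PiLp 2 (fun i : Fin N => EuclideanSpace ℝ (Fin (n i))))
    (i : Fin N) (hagree : xt i = x i) :
    (∫ τ in (0:ℝ)..1, ⟪s i, gradient f (x + τ • s) i - gradient f xt i⟫) ≤
      ‖s i‖ * ∑ j, L i j * ((1 / 2) * ‖s j‖ + ‖x j - xt j‖) :=
  stmt11_general f L hL0 hLip x s xt i
end
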